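/- arXiv:1403.0199 — 4 statements merged into one kernel-verified Lean document; each statement's English description precedes it below -/
import Mathlib

section
/- Let p > -1, a, γ > 0, d > 0 and λ ∈ ℝ. Suppose u ∈ C²(ℝ) is real-valued with u, u' ∈ L²(ℝ) and u(x)u'(x) → 0 as |x| → ∞, v ∈ L²(ℝ) ∩ L⁴(ℝ), the functions |u|^{p+2} and u²|v| are integrable, and the Euler–Lagrange system λu'' - λu = -uv - a|u|^p u, -2dλ v = -u² - γv³ holds pointwise on ℝ. Then 2λ(‖u‖_{L²}² + ‖u'‖_{L²}² + d‖v‖_{L²}²) = 3∫_ℝ u²v dx + 2a∫_ℝ |u|^{p+2} dx + γ∫_ℝ v⁴ dx. -/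
open MeasureTheory Filter

noncomputable section

/-- The continuous extension of `s ↦ |s|^p s` (equal to `0` at `s = 0`),
well defined for `p > -1`. -/
def singPow (p s : ℝ) : ℝ := if s = 0 then 0 else |s| ^ p * s

/-!
Multiply the first equation by `u` and the second by `v`. Integrating `λ u u''` by parts gives
`-λ ∫ u'²`, the boundary terms vanishing because `u u' → 0` at `±∞`; integrating the rest is
legitimate by the integrability hypotheses. The two resulting scalar identities add up to the claim.
Integration by parts is applied to `(λ u) u''` rather than `u u''`: the first equation makes
`λ u u''` integrable, whereas nothing controls `u u''` when `λ = 0`.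
-/

lemma singPow_mul_self {p : ℝ} (hp : p + 2 ≠ 0) (s : ℝ) : singPow p s * s = |s| ^ (p + 2) := by
  unfold singPow
  split_ifs with hs
  · simp [hs, Real.zero_rpow hp]
  · rw [Real.rpow_add (abs_pos.mpr hs), Real.rpow_two, sq_abs]
    ring

lemma MeasureTheory.MemLp.integrable_pow_four {α : Type*} [MeasurableSpace α] {μ : Measure α}
    {f : α → ℝ} (hf : MemLp f 4 μ) : Integrable (fun x => f x ^ 4) μ :=
  (hf.integrable_norm_pow (p := 4) (by norm_num)).congr
    (.of_forall fun x => by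
      simp [Real.norm_eq_abs, pow_abs, abs_of_nonneg (by positivity : 0 ≤ f x ^ 4)])

theorem integral_mul_deriv_eq_neg_of_tendsto_cocompact {A : Type*} [NormedRing A]
    [NormedAlgebra ℝ A] [CompleteSpace A] {f f' g g' : ℝ → A}
    (hf : ∀ x, HasDerivAt f (f' x) x) (hg : ∀ x, HasDerivAt g (g' x) x)
    (hfg' : Integrable (f * g')) (hf'g : Integrable (f' * g))
    (hlim : Tendsto (f * g) (cocompact ℝ) (nhds 0)) :
    ∫ x, f x * g' x = -∫ x, f' x * g x := by
  rw [cocompact_eq_atBot_atTop] at hlim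
  rw [integral_mul_deriv_eq_deriv_mul (fun x _ => hf x) (fun x _ => hg x) hfg' hf'g
    (hlim.mono_left le_sup_left) (hlim.mono_left le_sup_right)]
  simp

lemma integral_const_mul_mul_deriv_deriv {u : ℝ → ℝ} (hu : ContDiff ℝ 2 u)
    (hu' : MemLp (deriv u) 2) (hdecay : Tendsto (fun x => u x * deriv u x) (cocompact ℝ) (nhds 0))
    (c : ℝ) (hint : Integrable fun x => c * u x * deriv (deriv u) x) :
    ∫ x, c * u x * deriv (deriv u) x = -(c * ∫ x, deriv u x ^ 2) := by
  rw [integral_mul_deriv_eq_neg_of_tendsto_cocompact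
      (fun x => (hu.differentiable (by norm_num) x).hasDerivAt.const_mul c)
      (fun x => (hu.differentiable_deriv_two x).hasDerivAt) hint
      ((hu'.integrable_sq.const_mul c).congr (.of_forall fun x => by
        simp only [Pi.mul_apply]; ring))
      (by simpa [Pi.mul_def, mul_assoc] using hdecay.const_mul c)]
  simp_rw [mul_assoc, ← sq, integral_const_mul]

theorem euler_lagrange_identity_general (p a γ d lam : ℝ) (hp : -1 < p) (u v : ℝ → ℝ)
    (hu : ContDiff ℝ 2 u)
    (huL2 : MemLp u 2) (hu'L2 : MemLp (deriv u) 2)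
    (hdecay : Tendsto (fun x => u x * deriv u x) (cocompact ℝ) (nhds 0))
    (hvL4 : MemLp v 4)
    (hup : Integrable (fun x => |u x| ^ (p + 2)))
    (huv : Integrable (fun x => (u x) ^ 2 * |v x|))
    (heq1 : ∀ x, lam * deriv (deriv u) x - lam * u x = -(u x * v x) - a * singPow p (u x))
    (heq2 : ∀ x, -2 * d * lam * v x = -(u x) ^ 2 - γ * (v x) ^ 3) :
    2 * lam * ((∫ x : ℝ, (u x) ^ 2) + (∫ x : ℝ, (deriv u x) ^ 2) + d * ∫ x : ℝ, (v x) ^ 2)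
      = 3 * (∫ x : ℝ, (u x) ^ 2 * v x) + 2 * a * (∫ x : ℝ, |u x| ^ (p + 2))
        + γ * ∫ x : ℝ, (v x) ^ 4 := by
  have hu2 := huL2.integrable_sq
  have hu2v : Integrable (fun x => u x ^ 2 * v x) :=
    huv.mono' ((hu.continuous.pow 2).aestronglyMeasurable.mul hvL4.aestronglyMeasurable)
      (.of_forall fun x => by simp)
  have hlam_u2 : Integrable (fun x => lam * u x ^ 2 - u x ^ 2 * v x) :=
    (hu2.const_mul lam).sub hu2v
  have hmul_u : ∀ x, lam * u x * deriv (deriv u) x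
      = lam * u x ^ 2 - u x ^ 2 * v x - a * |u x| ^ (p + 2) := fun x => by
    linear_combination u x * heq1 x - a * singPow_mul_self (by linarith : 0 < p + 2).ne' (u x)
  have hmul_v : ∀ x, d * lam * v x ^ 2 * 2 = u x ^ 2 * v x + γ * v x ^ 4 := fun x => by
    linear_combination -v x * heq2 x
  have hparts := integral_const_mul_mul_deriv_deriv hu hu'L2 hdecay lam
    ((hlam_u2.sub (hup.const_mul a)).congr (.of_forall fun x => (hmul_u x).symm))
  have int_u : ∫ x, lam * u x * deriv (deriv u) x
      = lam * (∫ x, u x ^ 2) - (∫ x, u x ^ 2 * v x) - a * ∫ x, |u x| ^ (p + 2) := by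
    simp_rw [hmul_u]
    rw [integral_sub hlam_u2 (hup.const_mul a), integral_sub (hu2.const_mul lam) hu2v,
      integral_const_mul, integral_const_mul]
  have int_v : d * lam * (∫ x, v x ^ 2) * 2 = (∫ x, u x ^ 2 * v x) + γ * ∫ x, v x ^ 4 := by
    rw [← integral_const_mul, ← integral_mul_const, integral_congr_ae (.of_forall hmul_v),
      integral_add hu2v (hvL4.integrable_pow_four.const_mul γ), integral_const_mul]
  linear_combination 2 * hparts - 2 * int_u + int_v

/-- multiplying the Euler–Lagrange equations by `u` and `v`
respectively and integrating by parts gives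
`2λ(‖u‖₂² + ‖u'‖₂² + d‖v‖₂²) = 3∫u²v + 2a∫|u|^{p+2} + γ∫v⁴`. -/
theorem euler_lagrange_identity (p a γ d lam : ℝ) (hp : -1 < p) (ha : 0 < a) (hγ : 0 < γ)
    (hd : 0 < d) (u v : ℝ → ℝ)
    (hu : ContDiff ℝ 2 u)
    (huL2 : MemLp u 2) (hu'L2 : MemLp (deriv u) 2)
    (hdecay : Tendsto (fun x => u x * deriv u x) (cocompact ℝ) (nhds 0))
    (hvL2 : MemLp v 2) (hvL4 : MemLp v 4)
    (hup : Integrable (fun x => |u x| ^ (p + 2)))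
    (huv : Integrable (fun x => (u x) ^ 2 * |v x|))
    (heq1 : ∀ x, lam * deriv (deriv u) x - lam * u x = -(u x * v x) - a * singPow p (u x))
    (heq2 : ∀ x, -2 * d * lam * v x = -(u x) ^ 2 - γ * (v x) ^ 3) :
    2 * lam * ((∫ x : ℝ, (u x) ^ 2) + (∫ x : ℝ, (deriv u x) ^ 2) + d * ∫ x : ℝ, (v x) ^ 2)
      = 3 * (∫ x : ℝ, (u x) ^ 2 * v x) + 2 * a * (∫ x : ℝ, |u x| ^ (p + 2))
        + γ * ∫ x : ℝ, (v x) ^ 4 :=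
  euler_lagrange_identity_general p a γ d lam hp u v hu huL2 hu'L2 hdecay hvL4 hup huv heq1 heq2
end
end

section
/- Let p > 0, a, γ > 0, c ≥ 0 and c* ∈ ℝ. Let φ, ψ ∈ C²(ℝ) with φ, φ', φ'', ψ, ψ', ψ'' all bounded, φ ≥ 0, ψ ≤ 0, φ and -ψ radially decreasing, satisfying pointwise on ℝ the profile system -φ'' + c*φ = -φψ - a φ^{p+1} and cψ = -φ² - γψ³. Then the function x ↦ φ(x)^p is twice continuously differentiable on ℝ and φ^p, (φ^p)', (φ^p)'' are bounded; i.e. φ^p ∈ C²(ℝ) ∩ W^{2,∞}(ℝ). -/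
/-!
The profile equation reads `φ'' = g φ` with `g = c* + ψ + a φ^p` bounded, so `|φ''| ≤ k² φ`.
Then `w = φ' + kφ` satisfies `w' ≤ k w`; being bounded below, `w` cannot become negative
(it would decay like `-e^{kx}`), and since `φ'` is odd this gives `|φ'| ≤ kφ`.
By Grönwall, `φ` is either identically zero or everywhere positive, and in the latter case
`(φ^p)' = p (φ'/φ) φ^p` and `(φ^p)'' = p (φ''/φ + (p - 1) (φ'/φ)²) φ^p` are bounded by
multiples of `φ^p`.
-/

open MeasureTheory Filter

noncomputable section

/-- `g` is radially decreasing: even and nonincreasing on `[0,∞)`. -/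
def RadialDecr (g : ℝ → ℝ) : Prop :=
  (∀ x, g (-x) = g x) ∧ AntitoneOn g (Set.Ici 0)

open Real

section Gronwall

variable {w : ℝ → ℝ} {k : ℝ}

theorem antitone_mul_exp_neg_of_deriv_le (hw : Differentiable ℝ w)
    (h : ∀ x, deriv w x ≤ k * w x) : Antitone fun x => w x * exp (-(k * x)) := by
  have hder : ∀ x, HasDerivAt (fun x => w x * exp (-(k * x)))
      ((deriv w x - k * w x) * exp (-(k * x))) x := fun x =>
    ((hw x).hasDerivAt.fun_mul ((hasDerivAt_id' x).const_mul k).fun_neg.exp).congr_deriv (by ring)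
  refine antitone_of_deriv_nonpos (fun x => (hder x).differentiableAt) fun x => ?_
  rw [(hder x).deriv]
  exact mul_nonpos_of_nonpos_of_nonneg (by linarith [h x]) (exp_pos _).le

theorem monotone_mul_exp_neg_of_le_deriv (hw : Differentiable ℝ w)
    (h : ∀ x, k * w x ≤ deriv w x) : Monotone fun x => w x * exp (-(k * x)) := by
  have := antitone_mul_exp_neg_of_deriv_le (k := k) hw.neg fun x => by
    rw [deriv.neg, Pi.neg_apply]; linarith [h x]
  intro x y hxy
  simpa using this hxy

theorem nonneg_of_deriv_le_mul_of_bddBelow (hk : 0 < k) (hw : Differentiable ℝ w)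
    (h : ∀ x, deriv w x ≤ k * w x) (hbdd : BddBelow (Set.range w)) (x : ℝ) : 0 ≤ w x := by
  by_contra! hneg
  obtain ⟨M, hM⟩ := hbdd
  set u := w x * exp (-(k * x))
  have hu : u < 0 := mul_neg_of_neg_of_pos hneg (exp_pos _)
  have hlim : Tendsto (fun y => u * exp (k * y)) atTop atBot :=
    (tendsto_exp_atTop.comp (tendsto_id.const_mul_atTop hk)).const_mul_atTop_of_neg hu
  obtain ⟨y, hyx, hyM⟩ :=
    ((eventually_ge_atTop x).and (hlim.eventually_lt_atBot M)).exists
  have hwy : w y = w y * exp (-(k * y)) * exp (k * y) := by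
    rw [mul_assoc, ← exp_add, neg_add_cancel, exp_zero, mul_one]
  have : w y ≤ u * exp (k * y) := by
    rw [hwy]
    exact mul_le_mul_of_nonneg_right (antitone_mul_exp_neg_of_deriv_le hw h hyx) (exp_pos _).le
  linarith [hM ⟨y, rfl⟩]

end Gronwall

section EvenSolutions

variable {φ : ℝ → ℝ} {k : ℝ}

theorem deriv_neg_of_even (heven : ∀ x, φ (-x) = φ x) (x : ℝ) :
    deriv φ (-x) = -deriv φ x := by
  have := deriv_comp_neg (f := φ) (x := x)
  rw [funext heven] at this
  linarith

theorem abs_deriv_le_mul_of_deriv_deriv_le (hk : 0 < k) (hd₁ : Differentiable ℝ φ)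
    (hd₂ : Differentiable ℝ (deriv φ)) (hpos : ∀ x, 0 ≤ φ x) (heven : ∀ x, φ (-x) = φ x)
    (hbdd : BddBelow (Set.range (deriv φ))) (h : ∀ x, deriv (deriv φ) x ≤ k ^ 2 * φ x)
    (x : ℝ) : |deriv φ x| ≤ k * φ x := by
  set w := fun x => deriv φ x + k * φ x
  have hwd : Differentiable ℝ w := hd₂.add (hd₁.const_mul k)
  have hw' : ∀ x, deriv w x ≤ k * w x := fun x => by
    rw [deriv_fun_add (hd₂ x) ((hd₁ x).const_mul k), deriv_const_mul _ (hd₁ x)]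
    nlinarith [h x]
  have hwbdd : BddBelow (Set.range w) := by
    obtain ⟨M, hM⟩ := hbdd
    refine ⟨M, ?_⟩
    rintro _ ⟨y, rfl⟩
    nlinarith [hM ⟨y, rfl⟩, hpos y]
  have hw := nonneg_of_deriv_le_mul_of_bddBelow hk hwd hw' hwbdd
  have hwx := hw x
  have hwnx := hw (-x)
  simp only [w, deriv_neg_of_even heven, heven] at hwx hwnx
  exact abs_le.mpr ⟨by linarith, by linarith⟩

theorem eq_zero_of_abs_deriv_le_mul (hd : Differentiable ℝ φ) (hpos : ∀ x, 0 ≤ φ x)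
    (hb : ∀ x, |deriv φ x| ≤ k * φ x) {x₀ : ℝ} (h₀ : φ x₀ = 0) (x : ℝ) : φ x = 0 := by
  refine le_antisymm ?_ (hpos x)
  rcases le_total x₀ x with hx | hx
  · have : φ x * exp (-(k * x)) ≤ φ x₀ * exp (-(k * x₀)) :=
      antitone_mul_exp_neg_of_deriv_le hd (fun y => (abs_le.mp (hb y)).2) hx
    rw [h₀, zero_mul] at this
    exact nonpos_of_mul_nonpos_left this (exp_pos _)
  · have : φ x * exp (-(-k * x)) ≤ φ x₀ * exp (-(-k * x₀)) :=
      monotone_mul_exp_neg_of_le_deriv hd (fun y => by linarith [(abs_le.mp (hb y)).1]) hx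
    rw [h₀, zero_mul] at this
    exact nonpos_of_mul_nonpos_left this (exp_pos _)

end EvenSolutions

section Rpow

variable {f : ℝ → ℝ} {p k x : ℝ}

theorem deriv_rpow_eq_mul_div (hf : DifferentiableAt ℝ f x) (hx : 0 < f x) :
    deriv (fun y => f y ^ p) x = p * (deriv f x / f x) * f x ^ p := by
  rw [deriv_rpow_const hf (Or.inl hx.ne'), rpow_sub_one hx.ne']
  ring

theorem deriv_deriv_rpow_eq (hf : Differentiable ℝ f) (hf' : Differentiable ℝ (deriv f))
    (hpos : ∀ x, 0 < f x) (x : ℝ) :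
    deriv (deriv fun y => f y ^ p) x =
      p * (deriv (deriv f) x / f x + (p - 1) * (deriv f x / f x) ^ 2) * f x ^ p := by
  have hfx := (hpos x).ne'
  rw [show deriv (fun y => f y ^ p) = fun y => deriv f y * p * f y ^ (p - 1) from
    funext fun y => deriv_rpow_const (hf y) (Or.inl (hpos y).ne')]
  rw [(((hf' x).hasDerivAt.mul_const p).fun_mul
    ((hf x).hasDerivAt.rpow_const (Or.inl hfx))).deriv]
  rw [rpow_sub_one hfx, rpow_sub_one hfx, rpow_sub_one hfx]
  field_simp

theorem abs_deriv_rpow_le (hp : 0 ≤ p) (hf : DifferentiableAt ℝ f x) (hx : 0 < f x)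
    (hb : |deriv f x| ≤ k * f x) : |deriv (fun y => f y ^ p) x| ≤ p * k * f x ^ p := by
  have hr : |deriv f x / f x| ≤ k := by
    rwa [abs_div, abs_of_pos hx, div_le_iff₀ hx]
  rw [deriv_rpow_eq_mul_div hf hx, abs_mul, abs_mul, abs_of_nonneg hp,
    abs_of_nonneg (rpow_nonneg hx.le p)]
  gcongr

theorem abs_deriv_deriv_rpow_le (hp : 0 ≤ p) (hf : Differentiable ℝ f)
    (hf' : Differentiable ℝ (deriv f)) (hpos : ∀ x, 0 < f x)
    (hb₁ : |deriv f x| ≤ k * f x) (hb₂ : |deriv (deriv f) x| ≤ k ^ 2 * f x) :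
    |deriv (deriv fun y => f y ^ p) x| ≤ p * (1 + |p - 1|) * k ^ 2 * f x ^ p := by
  have hx := hpos x
  have hr₁ : |deriv f x / f x| ≤ k := by
    rwa [abs_div, abs_of_pos hx, div_le_iff₀ hx]
  have hr₂ : |deriv (deriv f) x / f x| ≤ k ^ 2 := by
    rwa [abs_div, abs_of_pos hx, div_le_iff₀ hx]
  have hsq : (deriv f x / f x) ^ 2 ≤ k ^ 2 := by
    rw [← sq_abs]
    exact pow_le_pow_left₀ (abs_nonneg _) hr₁ 2
  have hsum : |deriv (deriv f) x / f x + (p - 1) * (deriv f x / f x) ^ 2| ≤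
      (1 + |p - 1|) * k ^ 2 :=
    calc _ ≤ |deriv (deriv f) x / f x| + |p - 1| * (deriv f x / f x) ^ 2 :=
          (abs_add_le _ _).trans_eq (by rw [abs_mul, abs_of_nonneg (sq_nonneg (deriv f x / f x))])
      _ ≤ (1 + |p - 1|) * k ^ 2 := by nlinarith [abs_nonneg (p - 1)]
  rw [deriv_deriv_rpow_eq hf hf' hpos, abs_mul, abs_mul, abs_of_nonneg hp,
    abs_of_nonneg (rpow_nonneg hx.le p), mul_assoc p (1 + |p - 1|)]
  gcongr

end Rpow

theorem exists_pos_abs_le_sq_mul_of_eq_mul {u g φ : ℝ → ℝ} {K : ℝ} (hφ : ∀ x, 0 ≤ φ x)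
    (hu : ∀ x, u x = g x * φ x) (hg : ∀ x, |g x| ≤ K) :
    ∃ k > 0, ∀ x, |u x| ≤ k ^ 2 * φ x := by
  refine ⟨|K| + 1, by positivity, fun x => ?_⟩
  rw [hu x, abs_mul, abs_of_nonneg (hφ x)]
  exact mul_le_mul_of_nonneg_right (by nlinarith [hg x, le_abs_self K, abs_nonneg K]) (hφ x)

theorem contDiff_rpow_and_bounded_of_abs_deriv_deriv_le {φ : ℝ → ℝ} {p k B : ℝ}
    (hp : 0 < p) (hk : 0 < k) (hφ : ContDiff ℝ 2 φ) (hpos : ∀ x, 0 ≤ φ x)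
    (heven : ∀ x, φ (-x) = φ x) (hB : ∀ x, φ x ≤ B) (hbdd : BddBelow (Set.range (deriv φ)))
    (h₂ : ∀ x, |deriv (deriv φ) x| ≤ k ^ 2 * φ x) :
    ContDiff ℝ 2 (fun x => φ x ^ p) ∧
      ∃ M, ∀ x, |φ x ^ p| ≤ M ∧ |deriv (fun y => φ y ^ p) x| ≤ M ∧
        |deriv (deriv (fun y => φ y ^ p)) x| ≤ M := by
  have hd₁ : Differentiable ℝ φ := hφ.differentiable (by norm_num)
  have hd₂ : Differentiable ℝ (deriv φ) :=
    (hφ.iterate_deriv' 1 1).differentiable (by norm_num)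
  have h₁ := abs_deriv_le_mul_of_deriv_deriv_le hk hd₁ hd₂ hpos heven hbdd
    fun x => (abs_le.mp (h₂ x)).2
  by_cases hzero : ∃ x₀, φ x₀ = 0
  · obtain ⟨x₀, h₀⟩ := hzero
    have hφp : ∀ x, φ x ^ p = 0 := fun x => by
      rw [eq_zero_of_abs_deriv_le_mul hd₁ hpos h₁ h₀ x, zero_rpow hp.ne']
    refine ⟨?_, 0, ?_⟩ <;> simp [hφp, contDiff_const]
  have hzero : ∀ x, φ x ≠ 0 := fun x hx => hzero ⟨x, hx⟩
  have hφpos : ∀ x, 0 < φ x := fun x => (hpos x).lt_of_ne' (hzero x)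
  refine ⟨hφ.rpow_const_of_ne hzero,
    B ^ p + p * k * B ^ p + p * (1 + |p - 1|) * k ^ 2 * B ^ p, fun x => ?_⟩
  have hφB : φ x ^ p ≤ B ^ p := rpow_le_rpow (hpos x) (hB x) hp.le
  have hφp : 0 ≤ φ x ^ p := rpow_nonneg (hpos x) p
  have hc₁ : 0 ≤ p * k := by positivity
  have hc₂ : 0 ≤ p * (1 + |p - 1|) * k ^ 2 := by positivity
  have hderiv₁ := abs_deriv_rpow_le hp.le (hd₁ x) (hφpos x) (h₁ x)
  have hderiv₂ := abs_deriv_deriv_rpow_le hp.le hd₁ hd₂ hφpos (h₁ x) (h₂ x)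
  rw [abs_of_nonneg hφp]
  refine ⟨?_, ?_, ?_⟩ <;> nlinarith [mul_le_mul_of_nonneg_left hφB hc₁,
    mul_le_mul_of_nonneg_left hφB hc₂]

theorem phi_pow_p_regular_general (p a cs : ℝ) (hp : 0 < p) (φ ψ : ℝ → ℝ)
    (hφ : ContDiff ℝ 2 φ)
    (hφb : ∃ M, ∀ x, |φ x| ≤ M ∧ |deriv φ x| ≤ M ∧ |deriv (deriv φ) x| ≤ M)
    (hψb : ∃ M, ∀ x, |ψ x| ≤ M ∧ |deriv ψ x| ≤ M ∧ |deriv (deriv ψ) x| ≤ M)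
    (hφpos : ∀ x, 0 ≤ φ x)
    (hrd1 : RadialDecr φ)
    (heq1 : ∀ x, -deriv (deriv φ) x + cs * φ x = -(φ x * ψ x) - a * φ x ^ (p + 1)) :
    ContDiff ℝ 2 (fun x => φ x ^ p) ∧
    ∃ M, ∀ x, |φ x ^ p| ≤ M ∧ |deriv (fun y => φ y ^ p) x| ≤ M ∧
      |deriv (deriv (fun y => φ y ^ p)) x| ≤ M := by
  obtain ⟨Mφ, hMφ⟩ := hφb
  obtain ⟨Mψ, hMψ⟩ := hψb
  have hode : ∀ x, deriv (deriv φ) x = (cs + ψ x + a * φ x ^ p) * φ x := fun x => by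
    have := heq1 x
    rw [rpow_add_one' (hφpos x) (by linarith)] at this
    linear_combination -this
  have hg : ∀ x, |cs + ψ x + a * φ x ^ p| ≤ |cs| + Mψ + |a| * Mφ ^ p := fun x => by
    have hφp : |a * φ x ^ p| ≤ |a| * Mφ ^ p := by
      rw [abs_mul, abs_of_nonneg (rpow_nonneg (hφpos x) p)]
      exact mul_le_mul_of_nonneg_left
        (rpow_le_rpow (hφpos x) ((le_abs_self _).trans (hMφ x).1) hp.le) (abs_nonneg a)
    linarith [abs_add_three cs (ψ x) (a * φ x ^ p), (hMψ x).1]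
  obtain ⟨k, hk, h₂⟩ := exists_pos_abs_le_sq_mul_of_eq_mul hφpos hode hg
  exact contDiff_rpow_and_bounded_of_abs_deriv_deriv_le hp hk hφ hφpos hrd1.1
    (fun x => (le_abs_self _).trans (hMφ x).1)
    ⟨-Mφ, by rintro _ ⟨x, rfl⟩; exact (abs_le.mp (hMφ x).2.1).1⟩ h₂

/-- Remark 2 of the paper: if `p > 0`, `c ≥ 0` and
`(φ,ψ) ∈ (C² ∩ W^{2,∞})²` is a nonnegative/nonpositive radially decreasing
solution of the profile system `-φ'' + c*φ = -φψ - aφ^{p+1}`, `cψ = -φ² - γψ³`,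
then `φ^p ∈ C²(ℝ) ∩ W^{2,∞}(ℝ)`. -/
theorem phi_pow_p_regular (p a γ c cs : ℝ) (hp : 0 < p) (ha : 0 < a) (hγ : 0 < γ)
    (hc : 0 ≤ c) (φ ψ : ℝ → ℝ)
    (hφ : ContDiff ℝ 2 φ) (hψ : ContDiff ℝ 2 ψ)
    (hφb : ∃ M, ∀ x, |φ x| ≤ M ∧ |deriv φ x| ≤ M ∧ |deriv (deriv φ) x| ≤ M)
    (hψb : ∃ M, ∀ x, |ψ x| ≤ M ∧ |deriv ψ x| ≤ M ∧ |deriv (deriv ψ) x| ≤ M)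
    (hφpos : ∀ x, 0 ≤ φ x) (hψneg : ∀ x, ψ x ≤ 0)
    (hrd1 : RadialDecr φ) (hrd2 : RadialDecr (fun x => -ψ x))
    (heq1 : ∀ x, -deriv (deriv φ) x + cs * φ x = -(φ x * ψ x) - a * φ x ^ (p + 1))
    (heq2 : ∀ x, c * ψ x = -(φ x) ^ 2 - γ * (ψ x) ^ 3) :
    ContDiff ℝ 2 (fun x => φ x ^ p) ∧
    ∃ M, ∀ x, |φ x ^ p| ≤ M ∧ |deriv (fun y => φ y ^ p) x| ≤ M ∧
      |deriv (deriv (fun y => φ y ^ p)) x| ≤ M :=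
  phi_pow_p_regular_general p a cs hp φ ψ hφ hφb hψb hφpos hrd1 heq1
end
end

section
/- Let a, γ, ω > 0 and -1 < p < 0, and define h : [0,∞) → ℝ by h(s) = (2a/(p+2)) s^{p+2} + ω s² - (3/4) γ^{-1/3} s^{8/3}. Then: (i) there exists φ₀ > 0 such that h(φ₀) = 0 and h(s) > 0 for all s ∈ (0, φ₀); (ii) if moreover h is differentiable at φ₀ with h'(φ₀) < 0, then the improper integral ∫₀^{φ₀} h(s)^{-1/2} ds is finite. -/
/-!
Factoring out `s ^ (p + 2)` shows `h s = s ^ (p + 2) * (2a/(p+2) + o(1))` as `s → 0⁺`, and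
factoring out `s ^ (8/3)` shows `h s < 0` for large `s`; so the first positive zero `φ₀` is the
infimum of the zeros beyond a neighbourhood of `0` where `h > 0`. For (ii), `h ^ (-1/2)` is
dominated near `0` by a multiple of `s ^ (-(p+2)/2)`, integrable because `p < 0`, and near `φ₀`
by a multiple of `(φ₀ - s) ^ (-1/2)`, because `h s ≥ |h'(φ₀)| (φ₀ - s) / 2` there; in between it
is continuous on a compact interval.
-/

open MeasureTheory Filter

noncomputable section

/-- The first integral `h(s) = (2a/(p+2)) s^{p+2} + ω s² - (3/4) γ^{-1/3} s^{8/3}`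
of the standing-wave equation. -/
def hFun (p a γ ω : ℝ) (s : ℝ) : ℝ :=
  (2 * a / (p + 2)) * s ^ (p + 2) + ω * s ^ 2 - (3/4) * γ ^ (-(1:ℝ)/3) * s ^ ((8:ℝ)/3)

open Set Topology

theorem exists_first_pos_zero {f : ℝ → ℝ} (hf : Continuous f)
    (hnear : ∀ᶠ s in 𝓝[>] 0, 0 < f s) {M : ℝ} (hM : 0 < M) (hfM : f M ≤ 0) :
    ∃ b > (0:ℝ), f b = 0 ∧ ∀ s : ℝ, 0 < s → s < b → 0 < f s := by
  obtain ⟨δ, hδ, hpos_near⟩ := mem_nhdsGT_iff_exists_Ioo_subset.mp hnear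
  set T := Ici δ ∩ f ⁻¹' Iic 0
  have hMT : M ∈ T := ⟨not_lt.mp fun h => (hpos_near ⟨hM, h⟩).not_ge hfM, hfM⟩
  have hTbdd : BddBelow T := ⟨δ, fun _ hx => hx.1⟩
  have hbT : sInf T ∈ T :=
    (isClosed_Ici.inter (isClosed_Iic.preimage hf)).csInf_mem ⟨M, hMT⟩ hTbdd
  have hb : 0 < sInf T := hδ.trans_le hbT.1
  have hpos : ∀ s : ℝ, 0 < s → s < sInf T → 0 < f s := fun s hs hsb => by
    by_contra! hfs
    by_cases hsδ : s < δ
    · exact (hpos_near ⟨hs, hsδ⟩).not_ge hfs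
    · exact hsb.not_ge (csInf_le hTbdd ⟨not_lt.mp hsδ, hfs⟩)
  refine ⟨sInf T, hb, le_antisymm hbT.2 ?_, hpos⟩
  have hlim : Tendsto f (𝓝[<] sInf T) (𝓝 (f (sInf T))) :=
    hf.continuousAt.tendsto.mono_left nhdsWithin_le_nhds
  refine ge_of_tendsto hlim ?_
  filter_upwards [Ioo_mem_nhdsLT hb] with s hs using (hpos s hs.1 hs.2).le

theorem integrableOn_rpow_of_le_of_nonpos {f g : ℝ → ℝ} {S : Set ℝ} {r : ℝ} (hr : r ≤ 0)
    (hS : MeasurableSet S) (hf : Measurable f) (hg : IntegrableOn (fun s => g s ^ r) S)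
    (hg0 : ∀ s ∈ S, 0 < g s) (hgf : ∀ s ∈ S, g s ≤ f s) :
    IntegrableOn (fun s => f s ^ r) S := by
  refine hg.mono' (hf.pow_const r).aestronglyMeasurable (ae_restrict_of_forall_mem hS ?_)
  intro s hs
  rw [Real.norm_of_nonneg (Real.rpow_nonneg ((hg0 s hs).le.trans (hgf s hs)) r)]
  exact Real.rpow_le_rpow_of_nonpos (hg0 s hs) (hgf s hs) hr

theorem exists_integrableOn_Ioc_rpow_neg_half {f : ℝ → ℝ} {c r : ℝ} (hf : Measurable f)
    (hc : 0 < c) (hr : r < 2) (hlow : ∀ᶠ s in 𝓝[>] 0, c * s ^ r ≤ f s) :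
    ∃ δ > (0:ℝ), IntegrableOn (fun s => f s ^ (-(1:ℝ)/2)) (Ioc 0 δ) := by
  obtain ⟨u, hu : 0 < u, hlow⟩ := mem_nhdsGT_iff_exists_Ioo_subset.mp hlow
  have hsub : Ioc 0 (u / 2) ⊆ Ioo 0 u := Ioc_subset_Ioo_right (by linarith)
  refine ⟨u / 2, by positivity, integrableOn_rpow_of_le_of_nonpos (g := fun s => c * s ^ r)
    (by norm_num) measurableSet_Ioc hf ?_ (fun s hs => by have := hs.1; positivity)
    (fun s hs => hlow (hsub hs))⟩
  have hpow : IntegrableOn (fun s : ℝ => s ^ (r * (-(1:ℝ)/2))) (Ioc 0 (u / 2)) :=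
    (intervalIntegrable_iff_integrableOn_Ioc_of_le (by positivity)).mp
      (intervalIntegral.intervalIntegrable_rpow' (by linarith))
  refine IntegrableOn.congr_fun (hpow.const_mul (c ^ (-(1:ℝ)/2))) (fun s hs => ?_)
    measurableSet_Ioc
  rw [Real.mul_rpow hc.le (Real.rpow_nonneg hs.1.le r), ← Real.rpow_mul hs.1.le]

theorem HasDerivAt.eventually_add_mul_sub_lt {f : ℝ → ℝ} {f' b K : ℝ}
    (hf : HasDerivAt f f' b) (hK : K < -f') :
    ∀ᶠ s in 𝓝[<] b, f b + K * (b - s) < f s := by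
  filter_upwards [hf.hasDerivWithinAt.limsup_slope_le' (lt_irrefl b) (lt_neg.mp hK),
    self_mem_nhdsWithin] with s hslope hs
  rw [slope_def_field, div_lt_iff_of_neg (sub_neg.mpr hs)] at hslope
  linarith

theorem exists_integrableOn_Ioo_rpow_neg_half {f : ℝ → ℝ} {f' b : ℝ} (hf : Measurable f)
    (hderiv : HasDerivAt f f' b) (hb : f b = 0) (hf' : f' < 0) :
    ∃ m < b, IntegrableOn (fun s => f s ^ (-(1:ℝ)/2)) (Ioo m b) := by
  have hK : 0 < -f' / 2 := by linarith
  obtain ⟨m, hm, hlow⟩ := mem_nhdsLT_iff_exists_Ioo_subset.mp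
    (hderiv.eventually_add_mul_sub_lt (K := -f' / 2) (by linarith))
  refine ⟨m, hm, integrableOn_rpow_of_le_of_nonpos (g := fun s => -f' / 2 * (b - s))
    (by norm_num) measurableSet_Ioo hf ?_ (fun s hs => mul_pos hK (sub_pos.mpr hs.2))
    (fun s hs => le_of_lt (by simpa [hb] using hlow hs))⟩
  have hpow : IntervalIntegrable (fun s : ℝ => (b - s) ^ (-(1:ℝ)/2)) volume m b := by
    simpa using ((intervalIntegral.intervalIntegrable_rpow' (r := -(1:ℝ)/2) (a := 0)
      (b := b - m) (by norm_num)).comp_sub_left b).symm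
  refine IntegrableOn.congr_fun (((intervalIntegrable_iff_integrableOn_Ioo_of_le hm.le).mp
    hpow).const_mul ((-f' / 2) ^ (-(1:ℝ)/2))) (fun s hs => ?_) measurableSet_Ioo
  rw [Real.mul_rpow hK.le (sub_pos.mpr hs.2).le]

theorem integrableOn_rpow_neg_half_of_hasDerivAt {f : ℝ → ℝ} {b c r f' : ℝ}
    (hf : Continuous f) (hpos : ∀ s : ℝ, 0 < s → s < b → 0 < f s) (hb : f b = 0)
    (hderiv : HasDerivAt f f' b) (hf' : f' < 0) (hc : 0 < c) (hr : r < 2)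
    (hlow : ∀ᶠ s in 𝓝[>] 0, c * s ^ r ≤ f s) :
    IntegrableOn (fun s => f s ^ (-(1:ℝ)/2)) (Ioo 0 b) := by
  obtain ⟨δ, hδ, hleft⟩ := exists_integrableOn_Ioc_rpow_neg_half hf.measurable hc hr hlow
  obtain ⟨m, hm, hright⟩ := exists_integrableOn_Ioo_rpow_neg_half hf.measurable hderiv hb hf'
  have hmiddle : IntegrableOn (fun s => f s ^ (-(1:ℝ)/2)) (Icc δ m) :=
    (hf.continuousOn.rpow_const fun s hs =>
      Or.inl (hpos s (hδ.trans_le hs.1) (hs.2.trans_lt hm)).ne').integrableOn_Icc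
  refine ((hleft.union hmiddle).union hright).mono_set fun s hs => ?_
  by_cases hsδ : s ≤ δ
  · exact Or.inl (Or.inl ⟨hs.1, hsδ⟩)
  by_cases hsm : s ≤ m
  · exact Or.inl (Or.inr ⟨(not_le.mp hsδ).le, hsm⟩)
  · exact Or.inr ⟨not_le.mp hsm, hs.2⟩

theorem hFun_eq_rpow_mul {p a γ ω s : ℝ} (hs : 0 < s) (t : ℝ) :
    hFun p a γ ω s = s ^ t * (2 * a / (p + 2) * s ^ (p + 2 - t) + ω * s ^ (2 - t)
      - 3/4 * γ ^ (-(1:ℝ)/3) * s ^ ((8:ℝ)/3 - t)) := by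
  have hst : s ^ t ≠ 0 := (Real.rpow_pos_of_pos hs t).ne'
  simp only [hFun, Real.rpow_sub hs, Real.rpow_two]
  field_simp

theorem continuous_hFun {p : ℝ} (hp : -2 ≤ p) (a γ ω : ℝ) : Continuous (hFun p a γ ω) := by
  unfold hFun
  have := Real.continuous_rpow_const (q := p + 2) (by linarith)
  have := Real.continuous_rpow_const (q := (8:ℝ)/3) (by norm_num)
  fun_prop

theorem eventually_le_hFun_nhdsGT {p a : ℝ} (hp : -2 < p) (hp0 : p < 0) (ha : 0 < a)
    (γ ω : ℝ) : ∀ᶠ s in 𝓝[>] 0, a / (p + 2) * s ^ (p + 2) ≤ hFun p a γ ω s := by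
  set c := 2 * a / (p + 2)
  have hc : 0 < c := div_pos (by linarith) (by linarith)
  set B := fun s : ℝ => c + ω * s ^ (-p) - 3/4 * γ ^ (-(1:ℝ)/3) * s ^ (2/3 - p)
  have hB : Tendsto B (𝓝[>] 0) (𝓝 c) := by
    have h1 := Real.continuous_rpow_const (q := -p) (by linarith)
    have h2 := Real.continuous_rpow_const (q := 2/3 - p) (by linarith)
    have hB0 : B 0 = c := by
      simp [B, Real.zero_rpow (neg_ne_zero.mpr hp0.ne),
        Real.zero_rpow (show 2/3 - p ≠ 0 by linarith)]
    rw [← hB0]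
    exact (show Continuous B by fun_prop).continuousAt.tendsto.mono_left nhdsWithin_le_nhds
  filter_upwards [hB.eventually (lt_mem_nhds (half_lt_self hc)), self_mem_nhdsWithin]
    with s hBs (hs : 0 < s)
  rw [hFun_eq_rpow_mul hs (p + 2), sub_self, Real.rpow_zero, mul_one,
    show 2 - (p + 2) = -p by ring, show (8:ℝ)/3 - (p + 2) = 2/3 - p by ring]
  have := Real.rpow_pos_of_pos hs (p + 2)
  calc a / (p + 2) * s ^ (p + 2) = s ^ (p + 2) * (c / 2) := by ring
    _ ≤ s ^ (p + 2) * B s := by gcongr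

theorem eventually_hFun_neg_atTop {p γ : ℝ} (hp : p < 2/3) (hγ : 0 < γ) (a ω : ℝ) :
    ∀ᶠ s in atTop, hFun p a γ ω s < 0 := by
  set c := 3/4 * γ ^ (-(1:ℝ)/3)
  have hc : 0 < c := by positivity
  have hB : Tendsto (fun s : ℝ => 2 * a / (p + 2) * s ^ (-(2/3 - p)) + ω * s ^ (-(2/3 : ℝ))
      - c) atTop (𝓝 (-c)) := by
    have := (((tendsto_rpow_neg_atTop (y := 2/3 - p) (by linarith)).const_mul
      (2 * a / (p + 2))).add
      ((tendsto_rpow_neg_atTop (y := 2/3) (by norm_num)).const_mul ω)).sub_const c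
    rwa [mul_zero, mul_zero, zero_add, zero_sub] at this
  filter_upwards [hB.eventually (gt_mem_nhds (neg_neg_of_pos hc)), eventually_gt_atTop 0]
    with s hBs hs
  rw [hFun_eq_rpow_mul hs (8/3), sub_self, Real.rpow_zero, mul_one,
    show p + 2 - 8/3 = -(2/3 - p) by ring, show (2:ℝ) - 8/3 = -(2/3) by norm_num]
  exact mul_neg_of_pos_of_neg (Real.rpow_pos_of_pos hs _) hBs

theorem first_integral_zero_and_integrability_general (p a γ ω : ℝ) (hp1 : -1 < p) (hp0 : p < 0)
    (ha : 0 < a) (hγ : 0 < γ) :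
    (∃ φ₀ > (0:ℝ), hFun p a γ ω φ₀ = 0 ∧
      ∀ s : ℝ, 0 < s → s < φ₀ → 0 < hFun p a γ ω s) ∧
    (∀ φ₀ : ℝ, 0 < φ₀ → hFun p a γ ω φ₀ = 0 →
      (∀ s : ℝ, 0 < s → s < φ₀ → 0 < hFun p a γ ω s) →
      ∀ h' : ℝ, HasDerivAt (hFun p a γ ω) h' φ₀ → h' < 0 →
        IntegrableOn (fun s => (hFun p a γ ω s) ^ (-(1:ℝ)/2)) (Set.Ioo 0 φ₀)) := by
  have hc : 0 < a / (p + 2) := div_pos ha (by linarith)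
  have hcont := continuous_hFun (by linarith : -2 ≤ p) a γ ω
  have hlow := eventually_le_hFun_nhdsGT (by linarith) hp0 ha γ ω
  refine ⟨?_, fun φ₀ _ hzero hpos h' hderiv hneg =>
    integrableOn_rpow_neg_half_of_hasDerivAt hcont hpos hzero hderiv hneg hc (by linarith) hlow⟩
  obtain ⟨M, hM, hM0⟩ := ((eventually_hFun_neg_atTop (by linarith : p < 2/3) hγ a ω).and
    (eventually_gt_atTop 0)).exists
  refine exists_first_pos_zero hcont ?_ hM0 hM.le
  filter_upwards [hlow, self_mem_nhdsWithin] with s hs (hs0 : 0 < s)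
  exact (mul_pos hc (Real.rpow_pos_of_pos hs0 _)).trans_le hs

/-- (i) there is a first positive zero `φ₀` of `h` with `h > 0` on
`(0,φ₀)`; (ii) for any such `φ₀`, if `h` has derivative `h'(φ₀) < 0` at `φ₀`,
then `∫₀^{φ₀} h(s)^{-1/2} ds` is finite. -/
theorem first_integral_zero_and_integrability (p a γ ω : ℝ) (hp1 : -1 < p) (hp0 : p < 0)
    (ha : 0 < a) (hγ : 0 < γ) (hω : 0 < ω) :
    (∃ φ₀ > (0:ℝ), hFun p a γ ω φ₀ = 0 ∧
      ∀ s : ℝ, 0 < s → s < φ₀ → 0 < hFun p a γ ω s) ∧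
    (∀ φ₀ : ℝ, 0 < φ₀ → hFun p a γ ω φ₀ = 0 →
      (∀ s : ℝ, 0 < s → s < φ₀ → 0 < hFun p a γ ω s) →
      ∀ h' : ℝ, HasDerivAt (hFun p a γ ω) h' φ₀ → h' < 0 →
        IntegrableOn (fun s => (hFun p a γ ω s) ^ (-(1:ℝ)/2)) (Set.Ioo 0 φ₀)) :=
  first_integral_zero_and_integrability_general p a γ ω hp1 hp0 ha hγ
end
end

section
/- Let p ∈ ℝ, a ∈ ℝ, w ∈ ℝ, c ≥ 0, ε ≥ 0, and let φ, ψ : ℝ → ℝ be continuous and bounded with φ ≥ 0, and assume the function x ↦ (φ(x)+ε)^p is bounded (e.g. ε > 0, or p ≥ 0). Suppose U ∈ C²(ℝ, ℂ) with U, U' ∈ L²(ℝ) and U(x)U'(x) → 0 as |x| → ∞, v ∈ L²(ℝ, ℝ), and G : ℝ → ℂ is measurable with G·Ū integrable, such that pointwise on ℝ: iG + U'' = (w - c²/2)U + (a/2)(φ+ε)^p[(p+2)U + p e^{icx} Ū] + e^{i(c/2)x} φ v + ψ U. Then Re ∫_ℝ G Ū dx = (ap/2) Im ∫_ℝ (φ+ε)^p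 e^{icx} Ū² dx + Im ∫_ℝ e^{i(c/2)x} φ v Ū dx. -/
/-!
Multiply the equation by `Ū` and integrate. Since `U, U' ∈ L²`, the product `U'Ū` is integrable,
so integrating by parts leaves no boundary term and `∫ U''Ū = -∫ |U'|²` is real; hence
`Im ∫ (iG + U'')Ū = Re ∫ GŪ`. On the right-hand side every term other than
`(ap/2)(φ+ε)^p e^{icx} Ū²` and `e^{i(c/2)x} φ v Ū` is a real function times `|U|²`, so its
integral contributes nothing to the imaginary part.
-/

open MeasureTheory Filter Complex
open ComplexConjugate
open scoped ENNReal

theorem integral_deriv_deriv_mul_conj {𝕜 : Type*} [RCLike 𝕜] {U : ℝ → 𝕜} (hU : Differentiable ℝ U)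
    (hU' : Differentiable ℝ (deriv U)) (hU2 : MemLp U 2) (hU'2 : MemLp (deriv U) 2)
    (hU''U : Integrable fun x => deriv (deriv U) x * conj (U x)) :
    ∫ x, deriv (deriv U) x * conj (U x) = -↑(∫ x, ‖deriv U x‖ ^ 2) := by
  have hconj : ∀ x, HasDerivAt (fun y => conj (U y)) (conj (deriv U x)) x := fun x =>
    (hU x).hasDerivAt.star
  have hU'U' : Integrable fun x => conj (deriv U x) * deriv U x :=
    hU'2.star.integrable_mul hU'2
  have hUU' : Integrable fun x => conj (U x) * deriv U x := hU2.star.integrable_mul hU'2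
  calc ∫ x, deriv (deriv U) x * conj (U x)
      = ∫ x, conj (U x) * deriv (deriv U) x := by simp_rw [mul_comm (deriv (deriv U) _)]
    _ = -∫ x, conj (deriv U x) * deriv U x :=
        integral_mul_deriv_eq_deriv_mul_of_integrable (fun x _ => hconj x)
          (fun x _ => (hU' x).hasDerivAt) (by rw [mul_comm]; exact hU''U) hU'U' hUU'
    _ = -↑(∫ x, ‖deriv U x‖ ^ 2) := by
        simp_rw [RCLike.conj_mul, ← RCLike.ofReal_pow, integral_ofReal]

theorem re_integral_mul_conj_eq_im_integral {U G H : ℝ → ℂ} (hU : ContDiff ℝ 2 U)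
    (hU2 : MemLp U 2) (hU'2 : MemLp (deriv U) 2) (hGU : Integrable fun x => G x * conj (U x))
    (hH : Integrable H) (heq : ∀ x, (I * G x + deriv (deriv U) x) * conj (U x) = H x) :
    (∫ x, G x * conj (U x)).re = (∫ x, H x).im := by
  have hU' : ContDiff ℝ 1 (deriv U) := (contDiff_succ_iff_deriv (n := 1)).mp hU |>.2.2
  have hU''U : Integrable fun x => deriv (deriv U) x * conj (U x) :=
    (hH.sub (hGU.const_mul I)).congr (ae_of_all _ fun x => by rw [Pi.sub_apply, ← heq x]; ring)
  have hsplit :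
      ∫ x, H x = I * (∫ x, G x * conj (U x)) + ∫ x, deriv (deriv U) x * conj (U x) := by
    rw [← integral_const_mul, ← integral_add (hGU.const_mul I) hU''U]
    exact integral_congr_ae (ae_of_all _ fun x => by rw [← heq x]; ring)
  rw [hsplit, integral_deriv_deriv_mul_conj (hU.differentiable two_ne_zero)
    (hU'.differentiable one_ne_zero) hU2 hU'2 hU''U]
  simp

section EssentiallyBounded

variable {α : Type*} [MeasurableSpace α] {μ : Measure α}

theorem memLp_top_of_forall_abs_le {f : α → ℝ} (hf : AEStronglyMeasurable f μ)
    (hM : ∃ M, ∀ x, |f x| ≤ M) : MemLp f ∞ μ :=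
  let ⟨M, hM⟩ := hM
  memLp_top_of_bound hf M (ae_of_all _ hM)

theorem memLp_top_of_nonneg_of_forall_le {f : α → ℝ} (hf : AEStronglyMeasurable f μ)
    (h0 : ∀ x, 0 ≤ f x) (hM : ∃ M, ∀ x, f x ≤ M) : MemLp f ∞ μ :=
  memLp_top_of_forall_abs_le hf <| hM.imp fun _ hM x => (abs_of_nonneg (h0 x)).trans_le (hM x)

theorem memLp_top_exp_I_mul {μ : Measure ℝ} (k : ℝ) :
    MemLp (fun x : ℝ => exp (I * k * x)) ∞ μ :=
  memLp_top_of_bound (by fun_prop) 1 (ae_of_all _ fun x => by simp [norm_exp])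

theorem integrable_mul_mul_of_memLp_top {𝕜 : Type*} [NormedRing 𝕜] {b f g : α → 𝕜}
    (hb : MemLp b ∞ μ) (hf : MemLp f 2 μ) (hg : MemLp g 2 μ) :
    Integrable (fun x => b x * f x * g x) μ :=
  (hf.mul' hb : MemLp (fun x => b x * f x) 2 μ).integrable_mul hg

/-- `MemLp.ofReal` states its conclusion with the `RCLike` coercion, which is not syntactically
`Complex.ofReal`, so `ring` treats the two as different atoms. -/
theorem MeasureTheory.MemLp.complex_ofReal {p : ℝ≥0∞} {f : α → ℝ} (hf : MemLp f p μ) :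
    MemLp (fun x => (f x : ℂ)) p μ :=
  hf.ofReal

theorem im_integral_ofReal_mul_mul_conj (V : α → ℝ) (U : α → ℂ) :
    (∫ x, (V x : ℂ) * U x * conj (U x) ∂μ).im = 0 := by
  simp_rw [mul_assoc, mul_conj', ← Complex.ofReal_pow, ← Complex.ofReal_mul,
    integral_complex_ofReal, ofReal_im]

end EssentiallyBounded

theorem schrodinger_energy_identity_general (p a w c ε : ℝ) (hε : 0 ≤ ε)
    (φ ψ : ℝ → ℝ) (hφc : Continuous φ) (hψc : Continuous ψ)
    (hφb : ∃ M, ∀ x, |φ x| ≤ M) (hψb : ∃ M, ∀ x, |ψ x| ≤ M)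
    (hφpos : ∀ x, 0 ≤ φ x)
    (hpow : ∃ M, ∀ x, (φ x + ε) ^ p ≤ M)
    (U : ℝ → ℂ) (hU : ContDiff ℝ 2 U) (hU2 : MemLp U 2) (hU'2 : MemLp (deriv U) 2)
    (v : ℝ → ℝ) (hv : MemLp v 2)
    (G : ℝ → ℂ)
    (hGU : Integrable (fun x => G x * (starRingEnd ℂ) (U x)))
    (heq : ∀ x : ℝ,
      Complex.I * G x + deriv (deriv U) x
        = ((w : ℂ) - (c : ℂ) ^ 2 / 2) * U x
          + ((a : ℂ) / 2) * Complex.ofReal ((φ x + ε) ^ p)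
            * (((p : ℂ) + 2) * U x
               + (p : ℂ) * Complex.exp (Complex.I * (c : ℂ) * (x : ℂ))
                 * (starRingEnd ℂ) (U x))
          + Complex.exp (Complex.I * ((c : ℂ) / 2) * (x : ℂ)) * (φ x : ℂ) * (v x : ℂ)
          + (ψ x : ℂ) * U x) :
    (∫ x : ℝ, G x * (starRingEnd ℂ) (U x)).re
      = (a * p / 2) * (∫ x : ℝ, Complex.ofReal ((φ x + ε) ^ p)
            * Complex.exp (Complex.I * (c : ℂ) * (x : ℂ))
            * ((starRingEnd ℂ) (U x)) ^ 2).im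
        + (∫ x : ℝ, Complex.exp (Complex.I * ((c : ℂ) / 2) * (x : ℂ))
            * (φ x : ℂ) * (v x : ℂ) * (starRingEnd ℂ) (U x)).im := by
  have hq : MemLp (fun x => (φ x + ε) ^ p) ∞ :=
    memLp_top_of_nonneg_of_forall_le ((hφc.measurable.add_const ε).pow_const p).aestronglyMeasurable
      (fun x => Real.rpow_nonneg (add_nonneg (hφpos x) hε) p) hpow
  have hφ : MemLp φ ∞ := memLp_top_of_forall_abs_le hφc.aestronglyMeasurable hφb
  have hψ : MemLp ψ ∞ := memLp_top_of_forall_abs_le hψc.aestronglyMeasurable hψb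
  have hV : MemLp (fun x => w - c ^ 2 / 2 + a / 2 * (φ x + ε) ^ p * (p + 2) + ψ x) ∞ :=
    (((memLp_top_const _ : MemLp (fun _ : ℝ => w - c ^ 2 / 2) ∞).add
      ((hq.const_mul (a / 2)).mul_const (p + 2))).add hψ :)
  have hŪ : MemLp (fun x => conj (U x)) 2 := hU2.star
  have hCf : Integrable fun x : ℝ =>
      (((φ x + ε) ^ p : ℝ) : ℂ) * exp (I * (c : ℂ) * (x : ℂ)) * conj (U x) ^ 2 :=
    (integrable_mul_mul_of_memLp_top ((memLp_top_exp_I_mul c).mul' hq.complex_ofReal (r := ∞))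
      hŪ hŪ).congr (ae_of_all _ fun x => by ring)
  have hD : Integrable fun x : ℝ =>
      exp (I * ((c : ℂ) / 2) * (x : ℂ)) * (φ x : ℂ) * (v x : ℂ) * conj (U x) :=
    (integrable_mul_mul_of_memLp_top (hφ.complex_ofReal.mul' (memLp_top_exp_I_mul (c / 2)) (r := ∞))
      hv.complex_ofReal hŪ).congr (ae_of_all _ fun x => by push_cast; ring)
  have hVUU := integrable_mul_mul_of_memLp_top hV.complex_ofReal hU2 hŪ
  have hVCf := hVUU.fun_add (hCf.const_mul ((a * p / 2 : ℝ) : ℂ))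
  rw [re_integral_mul_conj_eq_im_integral hU hU2 hU'2 hGU (hVCf.fun_add hD)
      fun x => by rw [heq x]; push_cast; ring,
    integral_add hVCf hD, integral_add hVUU (hCf.const_mul _), integral_const_mul]
  simp only [add_im, im_integral_ofReal_mul_mul_conj, im_ofReal_mul, zero_add]

/-- the L² energy identity for the Schrödinger part of the
linearized system: if `iG + U'' = (w - c²/2)U + (a/2)(φ+ε)^p[(p+2)U + p e^{icx}Ū]
+ e^{i(c/2)x}φv + ψU` pointwise, then
`Re ∫ GŪ = (ap/2) Im ∫ (φ+ε)^p e^{icx} Ū² + Im ∫ e^{i(c/2)x} φ v Ū`. -/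
theorem schrodinger_energy_identity (p a w c ε : ℝ) (hc : 0 ≤ c) (hε : 0 ≤ ε)
    (φ ψ : ℝ → ℝ) (hφc : Continuous φ) (hψc : Continuous ψ)
    (hφb : ∃ M, ∀ x, |φ x| ≤ M) (hψb : ∃ M, ∀ x, |ψ x| ≤ M)
    (hφpos : ∀ x, 0 ≤ φ x)
    (hpow : ∃ M, ∀ x, (φ x + ε) ^ p ≤ M)
    (U : ℝ → ℂ) (hU : ContDiff ℝ 2 U) (hU2 : MemLp U 2) (hU'2 : MemLp (deriv U) 2)
    (hdecay : Tendsto (fun x => U x * deriv U x) (cocompact ℝ) (nhds 0))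
    (v : ℝ → ℝ) (hv : MemLp v 2)
    (G : ℝ → ℂ) (hG : Measurable G)
    (hGU : Integrable (fun x => G x * (starRingEnd ℂ) (U x)))
    (heq : ∀ x : ℝ,
      Complex.I * G x + deriv (deriv U) x
        = ((w : ℂ) - (c : ℂ) ^ 2 / 2) * U x
          + ((a : ℂ) / 2) * Complex.ofReal ((φ x + ε) ^ p)
            * (((p : ℂ) + 2) * U x
               + (p : ℂ) * Complex.exp (Complex.I * (c : ℂ) * (x : ℂ))
                 * (starRingEnd ℂ) (U x))
          + Complex.exp (Complex.I * ((c : ℂ) / 2) * (x : ℂ)) * (φ x : ℂ) * (v x : ℂ)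
          + (ψ x : ℂ) * U x) :
    (∫ x : ℝ, G x * (starRingEnd ℂ) (U x)).re
      = (a * p / 2) * (∫ x : ℝ, Complex.ofReal ((φ x + ε) ^ p)
            * Complex.exp (Complex.I * (c : ℂ) * (x : ℂ))
            * ((starRingEnd ℂ) (U x)) ^ 2).im
        + (∫ x : ℝ, Complex.exp (Complex.I * ((c : ℂ) / 2) * (x : ℂ))
            * (φ x : ℂ) * (v x : ℂ) * (starRingEnd ℂ) (U x)).im :=
  schrodinger_energy_identity_general p a w c ε hε φ ψ hφc hψc hφb hψb hφpos hpow U hU hU2 hU'2 v hv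
    G hGU heq
end
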